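/- Let f: ℝⁿ → ℝ be convex, differentiable and coordinate-wise L-smooth (L > 0), let x* be a minimizer of f with f* = f(x*), and let x ∈ ℝⁿ satisfy f(x) > f*. For each i ∈ [n] set x⁺_i = x − (1/L)·∇_i f(x)·e_i, and let E f⁺ := (1/n)·Σ_{i=1}^{n} f(x⁺_i) be the expected function value after one uniformly random coordinate descent step. If E f⁺ > f*, then 1/(E f⁺ − f*) − 1/(f(x) − f*) ≥ 1/(2·n·L·‖x − x*‖₂²). -/

import Mathlib

/-- The `i`-th standard unit vector of `ℝⁿ`. -/
def stdBasis (n : ℕ) (i : Fin n) : Fin n → ℝ := Pi.single i 1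

/-!
A step of length `1/L` along the `i`-th coordinate decreases `f` by at least `(∂ᵢf(x))² / (2L)`
(the descent lemma on the coordinate line), so a uniformly random step decreases it in
expectation by at least `‖∇f(x)‖² / (2nL)`. Convexity and Cauchy–Schwarz bound the gap
`f(x) − f*` by `‖∇f(x)‖ ‖x − x*‖`, so the expected decrease is at least
`(f(x) − f*)² / (2nL ‖x − x*‖²)`; dividing by `(f(x) − f*)(E f⁺ − f*) ≤ (f(x) − f*)²` gives the
inverse progress bound.
-/

section DescentLemma

variable {φ φ' : ℝ → ℝ} {L : ℝ}

lemma le_add_deriv_mul_add_sq_of_nonneg (hφ : ∀ s, HasDerivAt φ (φ' s) s)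
    (hφ' : ∀ s, 0 ≤ s → φ' s - φ' 0 ≤ L * s) {t : ℝ} (ht : 0 ≤ t) :
    φ t ≤ φ 0 + φ' 0 * t + L / 2 * t ^ 2 := by
  set q : ℝ → ℝ := fun s ↦ φ 0 + φ' 0 * s + L / 2 * s ^ 2 - φ s with hq_def
  have hq : ∀ s, HasDerivAt q (φ' 0 + L * s - φ' s) s := fun s ↦ by
    refine (((((hasDerivAt_id s).const_mul (φ' 0)).const_add (φ 0)).add
      ((hasDerivAt_pow 2 s).const_mul (L / 2))).sub (hφ s)).congr_deriv ?_
    ring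
  have hmono : MonotoneOn q (Set.Ici 0) :=
    monotoneOn_of_hasDerivWithinAt_nonneg (convex_Ici 0)
      (fun s _ ↦ (hq s).continuousAt.continuousWithinAt) (fun s _ ↦ (hq s).hasDerivWithinAt)
      (fun s hs ↦ by rw [interior_Ici] at hs; linarith [hφ' s hs.le])
  have := hmono Set.self_mem_Ici ht ht
  simp only [hq_def] at this
  linarith

lemma le_add_deriv_mul_add_sq (hφ : ∀ s, HasDerivAt φ (φ' s) s)
    (hφ' : ∀ s, |φ' s - φ' 0| ≤ L * |s|) (t : ℝ) :
    φ t ≤ φ 0 + φ' 0 * t + L / 2 * t ^ 2 := by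
  rcases le_total 0 t with ht | ht
  · refine le_add_deriv_mul_add_sq_of_nonneg hφ (fun s hs ↦ ?_) ht
    simpa [abs_of_nonneg hs] using (abs_le.1 (hφ' s)).2
  · have hψ : ∀ s, HasDerivAt (fun s ↦ φ (-s)) (-φ' (-s)) s := fun s ↦
      ((hφ (-s)).comp s (hasDerivAt_neg s)).congr_deriv (mul_neg_one _)
    have := le_add_deriv_mul_add_sq_of_nonneg (L := L) hψ (fun s hs ↦ ?_) (neg_nonneg.2 ht)
    · simp only [neg_neg, neg_zero, neg_mul_neg, even_two, Even.neg_pow] at this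
      linarith
    · simpa [abs_of_nonneg hs] using (abs_le.1 (hφ' (-s))).1

end DescentLemma

section NormedSpace

variable {E : Type*} [NormedAddCommGroup E] [NormedSpace ℝ E] {f : E → ℝ}

lemma DifferentiableAt.hasDerivAt_comp_add_smul {x v : E} {s : ℝ}
    (hf : DifferentiableAt ℝ f (x + s • v)) :
    HasDerivAt (fun s : ℝ ↦ f (x + s • v)) (fderiv ℝ f (x + s • v) v) s := by
  have hline : HasDerivAt (fun s : ℝ ↦ x + s • v) v s := by
    simpa using ((hasDerivAt_id s).smul_const v).const_add x
  exact hf.hasFDerivAt.comp_hasDerivAt s hline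

lemma Differentiable.le_add_fderiv_mul_add_sq (hf : Differentiable ℝ f) {x v : E} {L : ℝ}
    (hL : ∀ η : ℝ, |fderiv ℝ f (x + η • v) v - fderiv ℝ f x v| ≤ L * |η|) (t : ℝ) :
    f (x + t • v) ≤ f x + fderiv ℝ f x v * t + L / 2 * t ^ 2 := by
  simpa using le_add_deriv_mul_add_sq (φ := fun s ↦ f (x + s • v))
    (fun s ↦ (hf _).hasDerivAt_comp_add_smul) (by simpa using hL) t

lemma Differentiable.apply_sub_fderiv_div_smul_le (hf : Differentiable ℝ f) {x v : E} {L : ℝ}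
    (hL₀ : L ≠ 0) (hL : ∀ η : ℝ, |fderiv ℝ f (x + η • v) v - fderiv ℝ f x v| ≤ L * |η|) :
    f (x - (fderiv ℝ f x v / L) • v) ≤ f x - fderiv ℝ f x v ^ 2 / (2 * L) := by
  calc f (x - (fderiv ℝ f x v / L) • v)
      = f (x + (-(fderiv ℝ f x v / L)) • v) := by rw [neg_smul, sub_eq_add_neg]
    _ ≤ f x + fderiv ℝ f x v * (-(fderiv ℝ f x v / L)) + L / 2 * (-(fderiv ℝ f x v / L)) ^ 2 :=
      hf.le_add_fderiv_mul_add_sq hL _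
    _ = f x - fderiv ℝ f x v ^ 2 / (2 * L) := by field_simp; ring

lemma ConvexOn.le_sub_of_hasFDerivAt {f' : E →L[ℝ] ℝ} (hf : ConvexOn ℝ Set.univ f) {x : E}
    (hx : HasFDerivAt f f' x) (y : E) : f' (y - x) ≤ f y - f x := by
  have hline : HasDerivAt (f ∘ AffineMap.lineMap (k := ℝ) x y) (f' (y - x)) 0 :=
    hx.comp_hasDerivAt_of_eq 0 AffineMap.hasDerivAt_lineMap (by simp)
  have := (hf.comp_affineMap (AffineMap.lineMap (k := ℝ) x y)).le_slope_of_hasDerivAt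
    (Set.mem_univ 0) (Set.mem_univ 1) one_pos (by simpa using hline)
  simpa [slope_def_field] using this

end NormedSpace

lemma ContinuousLinearMap.apply_eq_sum_mul_stdBasis {n : ℕ} (ℓ : (Fin n → ℝ) →L[ℝ] ℝ)
    (v : Fin n → ℝ) : ℓ v = ∑ i, v i * ℓ (stdBasis n i) := by
  conv_lhs => rw [← Finset.univ_sum_single v]
  rw [map_sum]
  refine Finset.sum_congr rfl fun i _ ↦ ?_
  rw [stdBasis, ← smul_eq_mul, ← map_smul, ← Pi.single_smul', smul_eq_mul, mul_one]

section CoordinateDescent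

variable {n : ℕ} {f : (Fin n → ℝ) → ℝ}

lemma ConvexOn.sub_sq_le_sum_fderiv_sq_mul (hf : ConvexOn ℝ Set.univ f) {x : Fin n → ℝ}
    (hx : DifferentiableAt ℝ f x) {y : Fin n → ℝ} (hyx : f y ≤ f x) :
    (f x - f y) ^ 2 ≤ (∑ i, fderiv ℝ f x (stdBasis n i) ^ 2) * ∑ i, (x i - y i) ^ 2 := by
  have hgap : f x - f y ≤ ∑ i, fderiv ℝ f x (stdBasis n i) * (x i - y i) := by
    have := hf.le_sub_of_hasFDerivAt hx.hasFDerivAt y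
    rw [← neg_sub x y, map_neg, ContinuousLinearMap.apply_eq_sum_mul_stdBasis] at this
    simp only [Pi.sub_apply, mul_comm (x _ - y _)] at this
    linarith
  calc (f x - f y) ^ 2 ≤ (∑ i, fderiv ℝ f x (stdBasis n i) * (x i - y i)) ^ 2 :=
        pow_le_pow_left₀ (sub_nonneg.2 hyx) hgap 2
    _ ≤ _ := Finset.sum_mul_sq_le_sq_mul_sq _ _ _

lemma Differentiable.average_coordinate_step_le (hf : Differentiable ℝ f) (hn : n ≠ 0)
    {x : Fin n → ℝ} {L : ℝ} (hL : L ≠ 0)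
    (hsmooth : ∀ (i : Fin n) (η : ℝ),
      |fderiv ℝ f (x + η • stdBasis n i) (stdBasis n i) -
        fderiv ℝ f x (stdBasis n i)| ≤ L * |η|) :
    (1 / (n : ℝ)) * ∑ i, f (x - (fderiv ℝ f x (stdBasis n i) / L) • stdBasis n i) ≤
      f x - (∑ i, fderiv ℝ f x (stdBasis n i) ^ 2) / (2 * n * L) := by
  calc (1 / (n : ℝ)) * ∑ i, f (x - (fderiv ℝ f x (stdBasis n i) / L) • stdBasis n i)
      ≤ (1 / (n : ℝ)) * ∑ i, (f x - fderiv ℝ f x (stdBasis n i) ^ 2 / (2 * L)) := by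
        gcongr with i
        exact hf.apply_sub_fderiv_div_smul_le hL (hsmooth i)
    _ = f x - (∑ i, fderiv ℝ f x (stdBasis n i) ^ 2) / (2 * n * L) := by
        rw [Finset.sum_sub_distrib, ← Finset.sum_div]
        simp only [Finset.sum_const, Finset.card_univ, Fintype.card_fin, nsmul_eq_mul]
        field_simp

end CoordinateDescent

lemma one_div_mul_le_one_div_sub_one_div {a b s r c : ℝ} (hc : 0 < c) (ha : 0 < a) (hb : 0 < b)
    (hs : 0 ≤ s) (hdec : b ≤ a - s / c) (hsq : a ^ 2 ≤ s * r) :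
    1 / (c * r) ≤ 1 / b - 1 / a := by
  have hsr : 0 < s * r := (pow_pos ha 2).trans_le hsq
  have hr : 0 < r := pos_of_mul_pos_right hsr hs
  have hs' : 0 < s := pos_of_mul_pos_left hsr hr.le
  have hba : b ≤ a := hdec.trans (sub_le_self _ (div_nonneg hs hc.le))
  calc 1 / (c * r) = s / c / (s * r) := by field_simp
    _ ≤ s / c / a ^ 2 := by gcongr
    _ ≤ s / c / (a * b) := by gcongr; nlinarith
    _ ≤ (a - b) / (a * b) := by gcongr; linarith
    _ = 1 / b - 1 / a := by field_simp

theorem ucd_one_step_inverse_progress_general {n : ℕ} (L : ℝ) (hL : 0 < L)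
    (f : (Fin n → ℝ) → ℝ)
    (hconv : ConvexOn ℝ Set.univ f)
    (hdiff : Differentiable ℝ f)
    (hsmooth : ∀ (y : Fin n → ℝ) (i : Fin n) (η : ℝ),
      |fderiv ℝ f (y + η • stdBasis n i) (stdBasis n i) -
        fderiv ℝ f y (stdBasis n i)| ≤ L * |η|)
    (xstar : Fin n → ℝ)
    (x : Fin n → ℝ) (hx : f xstar < f x)
    (Efplus : ℝ)
    (hEfplus : Efplus =
      (1 / (n : ℝ)) * ∑ i, f (x - (fderiv ℝ f x (stdBasis n i) / L) • stdBasis n i))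
    (hplus : f xstar < Efplus) :
    1 / (Efplus - f xstar) - 1 / (f x - f xstar) ≥
      1 / (2 * n * L * ∑ j, (x j - xstar j) ^ 2) := by
  have hn : n ≠ 0 := by
    rintro rfl
    exact hx.ne (congrArg f (Subsingleton.elim _ _))
  have hdec := hdiff.average_coordinate_step_le hn hL.ne' (hsmooth x)
  rw [← hEfplus] at hdec
  exact one_div_mul_le_one_div_sub_one_div (by positivity) (sub_pos.2 hx) (sub_pos.2 hplus)
    (Finset.sum_nonneg fun i _ ↦ sq_nonneg _) (by linarith)
    (hconv.sub_sq_le_sum_fderiv_sq_mul (hdiff x) hx.le)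

/-- one-step progress of uniform coordinate descent (in expectation),
measured in inverse distances of function values to the optimum:
`1/(E f⁺ − f*) − 1/(f(x) − f*) ≥ 1/(2 n L ‖x − x*‖₂²)`. -/
theorem ucd_one_step_inverse_progress {n : ℕ} (L : ℝ) (hL : 0 < L)
    (f : (Fin n → ℝ) → ℝ)
    (hconv : ConvexOn ℝ Set.univ f)
    (hdiff : Differentiable ℝ f)
    (hsmooth : ∀ (y : Fin n → ℝ) (i : Fin n) (η : ℝ),
      |fderiv ℝ f (y + η • stdBasis n i) (stdBasis n i) -
        fderiv ℝ f y (stdBasis n i)| ≤ L * |η|)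
    (xstar : Fin n → ℝ) (hmin : ∀ y, f xstar ≤ f y)
    (x : Fin n → ℝ) (hx : f xstar < f x)
    (Efplus : ℝ)
    (hEfplus : Efplus =
      (1 / (n : ℝ)) * ∑ i, f (x - (fderiv ℝ f x (stdBasis n i) / L) • stdBasis n i))
    (hplus : f xstar < Efplus) :
    1 / (Efplus - f xstar) - 1 / (f x - f xstar) ≥
      1 / (2 * n * L * ∑ j, (x j - xstar j) ^ 2) :=
  ucd_one_step_inverse_progress_general L hL f hconv hdiff hsmooth xstar x hx Efplus hEfplus hplus
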